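/- Let g be a probability density on ℝ with continuous cdf G, let λ ≠ 0, and let f(x) = (λ/(1 − e^{−λ})) g(x) e^{−λG(x)} be the exp-G density. Assume x ↦ f(x) log g(x) is Lebesgue integrable. Then the Shannon entropy of f satisfies −∫_ℝ f(x) log f(x) dx = 1 − λ/(e^λ − 1) − log(λ/(1 − e^{−λ})) − ∫_ℝ f(x) log g(x) dx. -/

import Mathlib

/-!
On `{g > 0}` we have `log f = log c + log g - λ G` with `c = λ / (1 - e^{-λ})`, so the entropy
reduces to `log c`, `∫ f log g` and `∫ f G`. Since `G` is the continuous cdf of `g`, it pushes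
`g(x) dx` forward to the uniform distribution on `(0, 1]` (probability integral transform); hence
`∫ φ(G) g = ∫₀¹ φ`, and `∫ f = 1`, `∫ f G = 1/λ - 1/(e^λ - 1)` become the total mass and the mean
of the exponential density `c e^{-λu}` truncated to `[0, 1]`.
-/

open Real Set Filter Topology MeasureTheory ProbabilityTheory

theorem Monotone.exists_preimage_Iic_eq_Iic {F : ℝ → ℝ} (hF : Monotone F) (hc : Continuous F)
    {t : ℝ} (hle : ∃ x, F x ≤ t) (hlt : ∃ x, t < F x) : ∃ a, F a = t ∧ F ⁻¹' Iic t = Iic a := by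
  obtain ⟨b, hb⟩ := hlt
  have hb_ub : b ∈ upperBounds (F ⁻¹' Iic t) := fun x hx => (hF.reflect_lt (hx.trans_lt hb)).le
  have hbdd : BddAbove (F ⁻¹' Iic t) := ⟨b, hb_ub⟩
  set a := sSup (F ⁻¹' Iic t)
  have ha : F a ≤ t := (isClosed_Iic.preimage hc).csSup_mem hle hbdd
  have hab : a ≤ b := csSup_le hle hb_ub
  obtain ⟨a', ha'ab, ha't⟩ := intermediate_value_Icc hab hc.continuousOn ⟨ha, hb.le⟩
  have ha'a : a' = a := le_antisymm (le_csSup hbdd ha't.le) ha'ab.1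
  refine ⟨a, ha'a ▸ ha't, Subset.antisymm (fun x hx => le_csSup hbdd hx) fun x hx => ?_⟩
  exact (hF hx).trans ha

namespace ProbabilityTheory

section ProbabilityIntegralTransform

variable {μ : Measure ℝ} [IsProbabilityMeasure μ] [NullSingletonClass μ]

theorem continuous_cdf : Continuous (cdf μ) := by
  refine continuous_iff_continuousAt.2 fun x => ?_
  rw [(monotone_cdf μ).continuousAt_iff_leftLim_eq_rightLim,
    ((cdf μ).right_continuous x).rightLim_eq]
  have h := (cdf μ).measure_singleton x
  rw [measure_cdf, measure_singleton, eq_comm, ENNReal.ofReal_eq_zero, sub_nonpos] at h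
  exact le_antisymm ((monotone_cdf μ).leftLim_le le_rfl) h

theorem measure_preimage_cdf_Iic (t : ℝ) : μ (cdf μ ⁻¹' Iic t) = ENNReal.ofReal (min t 1) := by
  rcases le_or_gt 1 t with h1 | h1
  · rw [min_eq_right h1, ENNReal.ofReal_one, ← measure_univ (μ := μ)]
    exact congrArg μ (eq_univ_of_forall fun x => (cdf_le_one μ x).trans h1)
  rw [min_eq_left h1.le]
  by_cases hle : ∃ x, cdf μ x ≤ t
  · obtain ⟨a, hat, ha⟩ := (monotone_cdf μ).exists_preimage_Iic_eq_Iic continuous_cdf hle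
      ((tendsto_cdf_atTop μ).eventually (eventually_gt_nhds h1)).exists
    rw [ha, ← ofReal_cdf, hat]
  · push Not at hle
    have ht : t ≤ 0 := le_of_not_gt fun ht =>
      let ⟨x, hx⟩ := ((tendsto_cdf_atBot μ).eventually (eventually_lt_nhds ht)).exists
      (hle x).not_gt hx
    rw [ENNReal.ofReal_of_nonpos ht,
      eq_empty_of_forall_notMem (s := cdf μ ⁻¹' Iic t) fun x hx => (hle x).not_ge hx, measure_empty]

theorem map_cdf : μ.map (cdf μ) = volume.restrict (Ioc 0 1) := by
  refine Measure.ext_of_Iic _ _ fun t => ?_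
  rw [Measure.map_apply (monotone_cdf μ).measurable measurableSet_Iic, measure_preimage_cdf_Iic,
    Measure.restrict_apply measurableSet_Iic, inter_comm, Ioc_inter_Iic, volume_Ioc, sub_zero,
    min_comm]

theorem integral_comp_cdf {E : Type*} [NormedAddCommGroup E] [NormedSpace ℝ E] {φ : ℝ → E}
    (hφ : AEStronglyMeasurable φ (volume.restrict (Ioc 0 1))) :
    ∫ x, φ (cdf μ x) ∂μ = ∫ u in Ioc 0 1, φ u := by
  rw [← map_cdf (μ := μ)] at hφ ⊢
  exact (integral_map (monotone_cdf μ).measurable.aemeasurable hφ).symm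

end ProbabilityIntegralTransform

section Density

variable {g : ℝ → ℝ}

theorem isProbabilityMeasure_withDensity_ofReal (hg0 : 0 ≤ᵐ[volume] g) (hgint : Integrable g)
    (hg1 : ∫ x, g x = 1) :
    IsProbabilityMeasure (volume.withDensity fun x => ENNReal.ofReal (g x)) :=
  ⟨by rw [withDensity_apply _ MeasurableSet.univ, Measure.restrict_univ,
    ← ofReal_integral_eq_lintegral_ofReal hgint hg0, hg1, ENNReal.ofReal_one]⟩

theorem cdf_withDensity_ofReal (hg0 : 0 ≤ᵐ[volume] g) (hgint : Integrable g) (hg1 : ∫ x, g x = 1)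
    (x : ℝ) : cdf (volume.withDensity fun x => ENNReal.ofReal (g x)) x = ∫ t in Iic x, g t := by
  have := isProbabilityMeasure_withDensity_ofReal hg0 hgint hg1
  rw [cdf_eq_real, measureReal_def, withDensity_apply _ measurableSet_Iic,
    ← ofReal_integral_eq_lintegral_ofReal hgint.integrableOn (ae_restrict_of_ae hg0),
    ENNReal.toReal_ofReal (setIntegral_nonneg_of_ae_restrict (ae_restrict_of_ae hg0))]

theorem integrable_comp_cdf_mul (hgint : Integrable g) (ν : Measure ℝ) {φ : ℝ → ℝ}
    (hφ : Continuous φ) : Integrable fun x => φ (cdf ν x) * g x := by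
  obtain ⟨C, hC⟩ := isCompact_Icc.exists_bound_of_continuousOn (hφ.continuousOn (s := Icc 0 1))
  exact hgint.bdd_mul
    (hφ.comp_aestronglyMeasurable (monotone_cdf ν).measurable.aestronglyMeasurable)
    (ae_of_all _ fun x => hC _ ⟨cdf_nonneg ν x, cdf_le_one ν x⟩)

theorem integral_comp_cdf_mul_density (hg0 : 0 ≤ᵐ[volume] g) (hgint : Integrable g)
    (hg1 : ∫ x, g x = 1) {φ : ℝ → ℝ} (hφ : AEStronglyMeasurable φ (volume.restrict (Ioc 0 1))) :
    ∫ x, φ (cdf (volume.withDensity fun x => ENNReal.ofReal (g x)) x) * g x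
      = ∫ u in Ioc 0 1, φ u := by
  have := isProbabilityMeasure_withDensity_ofReal hg0 hgint hg1
  rw [← integral_comp_cdf (μ := volume.withDensity fun x => ENNReal.ofReal (g x)) hφ,
    integral_withDensity_eq_integral_toReal_smul₀ hgint.aemeasurable.ennreal_ofReal
      (ae_of_all _ fun _ => ENNReal.ofReal_lt_top)]
  refine integral_congr_ae (hg0.mono fun x hx => ?_)
  dsimp only
  rw [ENNReal.toReal_ofReal hx, smul_eq_mul, mul_comm]

end Density

end ProbabilityTheory

theorem integral_exp_neg_mul {l : ℝ} (hl : l ≠ 0) (a b : ℝ) :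
    ∫ u in a..b, exp (-(l * u)) = (exp (-(l * a)) - exp (-(l * b))) / l := by
  have hd : ∀ u ∈ uIcc a b, HasDerivAt (fun u => -exp (-(l * u)) / l) (exp (-(l * u))) u :=
    fun u _ => by
      refine (((hasDerivAt_id' u).const_mul l).fun_neg.exp.fun_neg.div_const l).congr_deriv ?_
      field_simp
  rw [intervalIntegral.integral_eq_sub_of_hasDerivAt hd
    ((by fun_prop : Continuous _).intervalIntegrable _ _)]
  ring

theorem integral_mul_exp_neg_mul {l : ℝ} (hl : l ≠ 0) (a b : ℝ) :
    ∫ u in a..b, u * exp (-(l * u))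
      = (a / l + 1 / l ^ 2) * exp (-(l * a)) - (b / l + 1 / l ^ 2) * exp (-(l * b)) := by
  have hd : ∀ u ∈ uIcc a b, HasDerivAt (fun u => -(u / l + 1 / l ^ 2) * exp (-(l * u)))
      (u * exp (-(l * u))) u := fun u _ => by
    refine ((((hasDerivAt_id' u).div_const l).add_const (1 / l ^ 2)).fun_neg.mul
      ((hasDerivAt_id' u).const_mul l).fun_neg.exp).congr_deriv ?_
    field_simp
    ring
  rw [intervalIntegral.integral_eq_sub_of_hasDerivAt hd
    ((by fun_prop : Continuous _).intervalIntegrable _ _)]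
  ring

theorem one_sub_exp_neg_ne_zero {l : ℝ} (hl : l ≠ 0) : 1 - exp (-l) ≠ 0 :=
  sub_ne_zero.2 fun h => hl (neg_eq_zero.1 ((exp_eq_one_iff _).1 h.symm))

theorem div_one_sub_exp_neg_pos {l : ℝ} (hl : l ≠ 0) : 0 < l / (1 - exp (-l)) := by
  rcases hl.lt_or_gt with h | h
  · exact div_pos_of_neg_of_neg h (sub_neg.2 (one_lt_exp_iff.2 (neg_pos.2 h)))
  · exact div_pos h (sub_pos.2 (exp_lt_one_iff.2 (neg_neg_iff_pos.2 h)))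

theorem integral_truncatedExp_density {l : ℝ} (hl : l ≠ 0) :
    ∫ u in (0 : ℝ)..1, l / (1 - exp (-l)) * exp (-(l * u)) = 1 := by
  rw [intervalIntegral.integral_const_mul, integral_exp_neg_mul hl]
  field_simp [one_sub_exp_neg_ne_zero hl]
  simp

theorem integral_truncatedExp_mean {l : ℝ} (hl : l ≠ 0) :
    ∫ u in (0 : ℝ)..1, l / (1 - exp (-l)) * (u * exp (-(l * u))) = 1 / l - 1 / (exp l - 1) := by
  have he : exp l - 1 ≠ 0 := sub_ne_zero.2 fun h => hl ((exp_eq_one_iff _).1 h)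
  rw [intervalIntegral.integral_const_mul, integral_mul_exp_neg_mul hl]
  simp only [mul_zero, mul_one, neg_zero, exp_zero, zero_div, zero_add]
  rw [exp_neg]
  field_simp
  ring

theorem mul_exp_mul_log_mul_exp {c y a : ℝ} (hc : 0 < c) (hy : 0 ≤ y) :
    c * y * exp a * log (c * y * exp a) = c * y * exp a * (log c + log y + a) := by
  rcases hy.eq_or_lt with rfl | hy
  · simp
  · rw [log_mul (by positivity) (exp_ne_zero a), log_mul hc.ne' hy.ne', log_exp]

/-- Let `g` be a probability density on `ℝ` with continuous cdf `G`,
`λ ≠ 0`, and `f(x) = (λ/(1 − e^{−λ})) g(x) e^{−λG(x)}` the exp-G density. If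
`x ↦ f(x) log g(x)` is integrable, then the Shannon entropy of `f` is
`−∫ f log f = 1 − λ/(e^λ − 1) − log(λ/(1 − e^{−λ})) − ∫ f log g`. -/
theorem expG_shannon_entropy
    (g : ℝ → ℝ) (hg0 : ∀ x, 0 ≤ g x) (hgint : Integrable g)
    (hg1 : ∫ x, g x = 1)
    (G : ℝ → ℝ) (hG : ∀ x, G x = ∫ t in Iio x, g t)
    (l : ℝ) (hl : l ≠ 0)
    (f : ℝ → ℝ)
    (hf : ∀ x, f x = l / (1 - Real.exp (-l)) * g x * Real.exp (-(l * G x)))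
    (hint : Integrable (fun x => f x * Real.log (g x))) :
    -∫ x, f x * Real.log (f x)
      = 1 - l / (Real.exp l - 1) - Real.log (l / (1 - Real.exp (-l)))
        - ∫ x, f x * Real.log (g x) := by
  have hg0' : 0 ≤ᵐ[volume] g := ae_of_all _ hg0
  set μ := volume.withDensity fun x => ENNReal.ofReal (g x)
  obtain rfl : G = cdf μ := funext fun x => by
    rw [hG, cdf_withDensity_ofReal hg0' hgint hg1, integral_Iic_eq_integral_Iio]
  set c := l / (1 - exp (-l))
  have hf_eq : f = fun x => c * exp (-(l * cdf μ x)) * g x := funext fun x => by rw [hf]; ring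
  have hfG_eq : (fun x => f x * cdf μ x) = fun x => c * (cdf μ x * exp (-(l * cdf μ x))) * g x :=
    funext fun x => by rw [hf]; ring
  have hf_int : Integrable f := by
    rw [hf_eq]
    exact integrable_comp_cdf_mul (φ := fun u => c * exp (-(l * u))) hgint μ (by fun_prop)
  have hfG_int : Integrable fun x => f x * cdf μ x := by
    rw [hfG_eq]
    exact integrable_comp_cdf_mul (φ := fun u => c * (u * exp (-(l * u)))) hgint μ (by fun_prop)
  have hf_one : ∫ x, f x = 1 := by
    rw [← integral_truncatedExp_density hl, intervalIntegral.integral_of_le zero_le_one, hf_eq]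
    exact integral_comp_cdf_mul_density (φ := fun u => c * exp (-(l * u))) hg0' hgint hg1
      (by fun_prop)
  have hfG : ∫ x, f x * cdf μ x = 1 / l - 1 / (exp l - 1) := by
    rw [← integral_truncatedExp_mean hl, intervalIntegral.integral_of_le zero_le_one, hfG_eq]
    exact integral_comp_cdf_mul_density (φ := fun u => c * (u * exp (-(l * u)))) hg0' hgint hg1
      (by fun_prop)
  have hlog : ∀ x, f x * log (f x) = f x * log c + f x * log (g x) - l * (f x * cdf μ x) :=
    fun x => by rw [hf x, mul_exp_mul_log_mul_exp (div_one_sub_exp_neg_pos hl) (hg0 x)]; ring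
  rw [integral_congr_ae (ae_of_all _ hlog), integral_sub ((hf_int.mul_const _).fun_add hint)
    (hfG_int.const_mul l), integral_add (hf_int.mul_const _) hint, integral_mul_const,
    integral_const_mul, hf_one, hfG]
  field_simp
  ring
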